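/- If cov(M) = 𝔡 then cov(E) = max{cov(M), cov(N)}. -/

import Mathlib

open MeasureTheory Set Filter Cardinal

/-- `μ` is the uniform product ("fair coin") probability measure on Cantor space `2^ω`,
characterized by its values on cylinders. -/
def IsFairCoin (μ : Measure (ℕ → Bool)) : Prop :=
  ∀ (s : Finset ℕ) (σ : ℕ → Bool),
    μ {x : ℕ → Bool | ∀ i ∈ s, x i = σ i} = (1 / 2 : ENNReal) ^ s.card

/-- The σ-ideal of μ-null sets. -/
def nullIdeal (μ : Measure (ℕ → Bool)) : Set (Set (ℕ → Bool)) := {A | μ A = 0}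

/-- The σ-ideal of meager subsets of Cantor space. -/
def meagerIdeal : Set (Set (ℕ → Bool)) := {A | IsMeagre A}

/-- The σ-ideal generated by closed measure zero sets. -/
def closedNullIdeal (μ : Measure (ℕ → Bool)) : Set (Set (ℕ → Bool)) :=
  {A | ∃ F : ℕ → Set (ℕ → Bool), (∀ n, IsClosed (F n) ∧ μ (F n) = 0) ∧ A ⊆ ⋃ n, F n}

/-- `add(I, J)`: the least cardinality of a subfamily of `I` whose union is not in `J`. -/
noncomputable def addIJ (I J : Set (Set (ℕ → Bool))) : Cardinal :=
  sInf {c : Cardinal | ∃ A : Set (Set (ℕ → Bool)), A ⊆ I ∧ ⋃₀ A ∉ J ∧ c = #A}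

/-- `cov(J)`: the least cardinality of a subfamily of `J` covering the whole space. -/
noncomputable def covI (J : Set (Set (ℕ → Bool))) : Cardinal :=
  sInf {c : Cardinal | ∃ A : Set (Set (ℕ → Bool)), A ⊆ J ∧ ⋃₀ A = Set.univ ∧ c = #A}

/-- `unif(J)`: the least cardinality of a set of reals not in `J`. -/
noncomputable def unifI (J : Set (Set (ℕ → Bool))) : Cardinal :=
  sInf {c : Cardinal | ∃ X : Set (ℕ → Bool), X ∉ J ∧ c = #X}

/-- `cof(I, J)`: the least cardinality of a subfamily of `J` cofinal over `I`. -/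
noncomputable def cofIJ (I J : Set (Set (ℕ → Bool))) : Cardinal :=
  sInf {c : Cardinal | ∃ A : Set (Set (ℕ → Bool)), A ⊆ J ∧
    (∀ B ∈ I, ∃ C ∈ A, B ⊆ C) ∧ c = #A}

/-- The dominating number 𝔡. -/
noncomputable def frakD : Cardinal :=
  sInf {c : Cardinal | ∃ F : Set (ℕ → ℕ),
    (∀ g : ℕ → ℕ, ∃ f ∈ F, ∀ᶠ n in atTop, g n ≤ f n) ∧ c = #F}

/-- The unbounding number 𝔟. -/
noncomputable def frakB : Cardinal :=
  sInf {c : Cardinal | ∃ F : Set (ℕ → ℕ),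
    (∀ g : ℕ → ℕ, ∃ f ∈ F, ¬ ∀ᶠ n in atTop, f n ≤ g n) ∧ c = #F}

open scoped ENNReal

/-!
Every closed null set is meagre and null, which gives `≥`. For `≤`, fix a cover of `2^ω` by
`cov(N)` null sets. A null set `B` lies in open sets `U n` of measure `< 1/n`, and each `U n` is a
countable union of closed sets `K n k`. For `f : ℕ → ℕ` the set `⋂ n, ⋃ k ≤ f n, K n k` is closed
and null, and it contains every point `x ∈ B` whose "entry times" `n ↦ min {k | x ∈ K n k}` are
bounded by `f` everywhere. A dominating family of size `𝔡` (shifted by constants) therefore yields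
a cover of `B`, hence of `2^ω`, by `𝔡 · cov(N)` closed null sets.
-/

section CovI

variable {I J : Set (Set (ℕ → Bool))}

lemma covI_le_mk {A : Set (Set (ℕ → Bool))} (hA : A ⊆ J) (hcov : ⋃₀ A = Set.univ) :
    covI J ≤ #A :=
  csInf_le (OrderBot.bddBelow _) ⟨A, hA, hcov, rfl⟩

lemma exists_mk_eq_covI (hJ : ∃ A ⊆ J, ⋃₀ A = Set.univ) :
    ∃ A ⊆ J, ⋃₀ A = Set.univ ∧ #A = covI J := by
  obtain ⟨A, hAJ, hA⟩ := hJ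
  obtain ⟨B, hBJ, hB, hcard⟩ := csInf_mem (s := {c : Cardinal | ∃ A : Set (Set (ℕ → Bool)),
    A ⊆ J ∧ ⋃₀ A = Set.univ ∧ c = #A}) ⟨_, A, hAJ, hA, rfl⟩
  exact ⟨B, hBJ, hB, hcard.symm⟩

lemma exists_sUnion_eq_univ_of_singleton_mem (hJ : ∀ x, {x} ∈ J) :
    ∃ A ⊆ J, ⋃₀ A = Set.univ :=
  ⟨range singleton, range_subset_iff.mpr hJ, sUnion_eq_univ_iff.mpr fun x => ⟨{x}, ⟨x, rfl⟩, rfl⟩⟩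

lemma covI_mono (hIJ : I ⊆ J) (hI : ∃ A ⊆ I, ⋃₀ A = Set.univ) : covI J ≤ covI I := by
  obtain ⟨A, hAI, hA, hcard⟩ := exists_mk_eq_covI hI
  exact hcard ▸ covI_le_mk (hAI.trans hIJ) hA

end CovI

section FairCoin

variable {μ : Measure (ℕ → Bool)}

lemma IsFairCoin.isProbabilityMeasure (hμ : IsFairCoin μ) : IsProbabilityMeasure μ :=
  ⟨by simpa using hμ ∅ fun _ => false⟩

lemma IsFairCoin.nullSingletonClass (hμ : IsFairCoin μ) : NullSingletonClass μ := by
  refine ⟨fun x => le_antisymm (ge_of_tendsto'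
    (ENNReal.tendsto_pow_atTop_nhds_zero_of_lt_one (by norm_num : (1 / 2 : ℝ≥0∞) < 1))
    fun n => ?_) bot_le⟩
  calc μ {x} ≤ μ {y | ∀ i ∈ Finset.range n, y i = x i} := measure_mono fun y hy _ _ => by rw [hy]
    _ = (1 / 2) ^ n := by rw [hμ, Finset.card_range]

lemma IsFairCoin.isOpenPosMeasure (hμ : IsFairCoin μ) : μ.IsOpenPosMeasure := by
  refine ⟨fun U hU ⟨x, hx⟩ hU0 => ?_⟩
  obtain ⟨s, u, hu, hsU⟩ := isOpen_pi_iff.mp hU x hx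
  have hcyl : {y : ℕ → Bool | ∀ i ∈ s, y i = x i} ⊆ U := fun y hy =>
    hsU fun i hi => (hy i hi).symm ▸ (hu i hi).2
  have := measure_mono_null hcyl hU0
  rw [hμ] at this
  exact pow_ne_zero _ (by norm_num) this

end FairCoin

section ClosedNull

variable {μ : Measure (ℕ → Bool)}

lemma closedNullIdeal_subset_nullIdeal : closedNullIdeal μ ⊆ nullIdeal μ :=
  fun _ ⟨_, hF, hsub⟩ => measure_mono_null hsub (measure_iUnion_null fun n => (hF n).2)

lemma closedNullIdeal_subset_meagerIdeal [μ.IsOpenPosMeasure] :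
    closedNullIdeal μ ⊆ meagerIdeal := fun _ ⟨_, hF, hsub⟩ =>
  (isMeagre_iUnion fun n => IsNowhereDense.isMeagre <|
    (hF n).1.isNowhereDense_iff.mpr (Measure.interior_eq_empty_of_null (hF n).2)).mono hsub

lemma mem_closedNullIdeal_of_isClosed {F : Set (ℕ → Bool)} (hF : IsClosed F) (hF0 : μ F = 0) :
    F ∈ closedNullIdeal μ :=
  ⟨fun _ => F, fun _ => ⟨hF, hF0⟩, subset_iUnion_of_subset 0 le_rfl⟩

lemma singleton_mem_closedNullIdeal [NullSingletonClass μ] (x : ℕ → Bool) :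
    {x} ∈ closedNullIdeal μ :=
  mem_closedNullIdeal_of_isClosed isClosed_singleton (measure_singleton x)

lemma aleph0_le_covI_nullIdeal [NeZero μ] [NullSingletonClass μ] : ℵ₀ ≤ covI (nullIdeal μ) := by
  obtain ⟨A, hAN, hA, hcard⟩ := exists_mk_eq_covI (J := nullIdeal μ)
    (exists_sUnion_eq_univ_of_singleton_mem measure_singleton)
  rw [← hcard]
  by_contra! hfin
  have hnull : μ (⋃₀ A) = 0 :=
    (measure_sUnion_null_iff (lt_aleph0_iff_set_finite.mp hfin).countable).mpr hAN
  exact NeZero.ne μ (Measure.measure_univ_eq_zero.mp (hA ▸ hnull))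

end ClosedNull

lemma IsOpen.exists_iUnion_isClosed_of_perfectlyNormal {X : Type*} [TopologicalSpace X]
    [PerfectlyNormalSpace X] {U : Set X} (hU : IsOpen U) :
    ∃ K : ℕ → Set X, (∀ k, IsClosed (K k)) ∧ U = ⋃ k, K k := by
  obtain ⟨V, hV, hUV⟩ := hU.isClosed_compl.isGδ.eq_iInter_nat
  refine ⟨fun k => (V k)ᶜ, fun k => (hV k).isClosed_compl, ?_⟩
  rw [← compl_iInter, ← hUV, compl_compl]

lemma exists_isClosed_null_family_of_null {X : Type*} [TopologicalSpace X]
    [PerfectlyNormalSpace X] [MeasurableSpace X] {μ : Measure X} [μ.OuterRegular] {B : Set X}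
    (hB : μ B = 0) : ∃ F : (ℕ → ℕ) → Set X, (∀ f, IsClosed (F f) ∧ μ (F f) = 0) ∧
      ∀ x ∈ B, ∃ g : ℕ → ℕ, ∀ f, g ≤ f → x ∈ F f := by
  choose U hBU hU hμU using fun n : ℕ =>
    B.exists_isOpen_lt_of_lt (n : ℝ≥0∞)⁻¹ (hB ▸ ENNReal.inv_pos.mpr (ENNReal.natCast_ne_top n))
  choose K hK hUK using fun n => (hU n).exists_iUnion_isClosed_of_perfectlyNormal
  refine ⟨fun f => ⋂ n, ⋃ k ≤ f n, K n k, fun f => ⟨?_, ?_⟩, fun x hx => ?_⟩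
  · exact isClosed_iInter fun n => (finite_Iic _).isClosed_biUnion fun k _ => hK n k
  · by_contra hne
    obtain ⟨n, hn⟩ := ENNReal.exists_inv_nat_lt hne
    have hsub : ⋂ n, ⋃ k ≤ f n, K n k ⊆ U n := (iInter_subset _ n).trans <|
      iUnion₂_subset fun k _ => (hUK n).symm ▸ subset_iUnion (K n) k
    exact lt_asymm hn ((measure_mono hsub).trans_lt (hμU n))
  · choose g hg using fun n => mem_iUnion.mp (hUK n ▸ hBU n hx)
    exact ⟨g, fun f hgf => mem_iInter.mpr fun n => mem_biUnion (hgf n) (hg n)⟩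

lemma exists_dominating_family_mk_le :
    ∃ D : Set (ℕ → ℕ), #D ≤ frakD * ℵ₀ ∧ ∀ g : ℕ → ℕ, ∃ f ∈ D, g ≤ f := by
  obtain ⟨D, hDdom, hD⟩ := csInf_mem (s := {c : Cardinal | ∃ F : Set (ℕ → ℕ),
    (∀ g : ℕ → ℕ, ∃ f ∈ F, ∀ᶠ n in atTop, g n ≤ f n) ∧ c = #F})
    ⟨_, Set.univ, fun g => ⟨g, mem_univ g, Eventually.of_forall fun _ => le_rfl⟩, rfl⟩
  refine ⟨range fun p : D × ℕ => (p.1 : ℕ → ℕ) + fun _ => p.2, ?_, fun g => ?_⟩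
  · calc _ ≤ #(D × ℕ) := mk_range_le
      _ = frakD * ℵ₀ := by rw [mk_prod, lift_id, lift_id, mk_nat, ← hD]; rfl
  · obtain ⟨f, hfD, hf⟩ := hDdom g
    obtain ⟨N, hN⟩ := eventually_atTop.mp hf
    -- the constant `c` takes care of the finitely many `n < N` where `f` may fall below `g`
    set c := (Finset.range N).sup g
    refine ⟨f + fun _ => c, ⟨(⟨f, hfD⟩, c), rfl⟩, fun n => ?_⟩
    rcases lt_or_ge n N with hn | hn
    · exact (Finset.le_sup (Finset.mem_range.mpr hn)).trans (Nat.le_add_left _ _)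
    · exact (hN n hn).trans (Nat.le_add_right _ _)

lemma covI_closedNullIdeal_le_max {μ : Measure (ℕ → Bool)} (hμ : IsFairCoin μ) :
    covI (closedNullIdeal μ) ≤ max frakD (covI (nullIdeal μ)) := by
  have := hμ.isProbabilityMeasure
  have := hμ.nullSingletonClass
  set κ := max frakD (covI (nullIdeal μ))
  have hκ : ℵ₀ ≤ κ := (aleph0_le_covI_nullIdeal (μ := μ)).trans (le_max_right _ _)
  obtain ⟨A, hAN, hA, hAcard⟩ := exists_mk_eq_covI (J := nullIdeal μ)
    (exists_sUnion_eq_univ_of_singleton_mem measure_singleton)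
  obtain ⟨D, hDcard, hDdom⟩ := exists_dominating_family_mk_le
  choose F hF hBF using fun B : A => exists_isClosed_null_family_of_null (μ := μ) (hAN B.2)
  have hcov : ⋃₀ range (fun p : A × D => F p.1 p.2) = Set.univ := by
    refine sUnion_eq_univ_iff.mpr fun x => ?_
    obtain ⟨B, hBA, hxB⟩ := sUnion_eq_univ_iff.mp hA x
    obtain ⟨g, hg⟩ := hBF ⟨B, hBA⟩ x hxB
    obtain ⟨f, hfD, hgf⟩ := hDdom g
    exact ⟨_, ⟨(⟨B, hBA⟩, ⟨f, hfD⟩), rfl⟩, hg f hgf⟩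
  have hE : range (fun p : A × D => F p.1 p.2) ⊆ closedNullIdeal μ := by
    rintro _ ⟨p, rfl⟩
    exact mem_closedNullIdeal_of_isClosed (hF _ _).1 (hF _ _).2
  calc covI (closedNullIdeal μ) ≤ #(range fun p : A × D => F p.1 p.2) := covI_le_mk hE hcov
    _ ≤ #A * #D := by rw [← lift_id #A, ← lift_id #D, ← mk_prod]; exact mk_range_le
    _ ≤ κ * (κ * κ) := by
      gcongr
      · exact hAcard ▸ le_max_right _ _
      · exact hDcard.trans (mul_le_mul' (le_max_left _ _) hκ)
    _ = κ := by rw [mul_eq_self hκ, mul_eq_self hκ]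

theorem cov_E_eq_max (μ : Measure (ℕ → Bool)) (hμ : IsFairCoin μ)
    (h : covI meagerIdeal = frakD) :
    covI (closedNullIdeal μ) = max (covI meagerIdeal) (covI (nullIdeal μ)) := by
  have := hμ.nullSingletonClass
  have := hμ.isOpenPosMeasure
  have hE : ∃ A ⊆ closedNullIdeal μ, ⋃₀ A = Set.univ :=
    exists_sUnion_eq_univ_of_singleton_mem singleton_mem_closedNullIdeal
  refine le_antisymm (h ▸ covI_closedNullIdeal_le_max hμ) (max_le ?_ ?_)
  · exact covI_mono closedNullIdeal_subset_meagerIdeal hE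
  · exact covI_mono closedNullIdeal_subset_nullIdeal hE
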